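/- Let ν ≥ 2 be an integer, let m ∈ {0, …, ν−1}, let φ_m^left ∈ L²(ℝ) vanish almost everywhere outside [0, ν+m], and let j ∈ ℕ satisfy 2^j ≥ 2ν. Define the left boundary function φ^bd_{j,m} : [0,1] → ℝ by φ^bd_{j,m}(x) = 2^{j/2} φ_m^left(2^j x). Then for every n ∈ ℕ: ∫₀¹ φ^bd_{j,m}(x) w_n(x) dx = Σ_{l=0}^{ν−1+m} 2^{−j/2} w_n(l/2^j) · ∫₀¹ φ_m^left(x+l) w_{⌊n/2^j⌋}(x) dx. -/

import Mathlib

open MeasureTheory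

/-- `natDigit n i` is the `i`-th binary digit `n^(i)` (for `i ≥ 1`) of `n ∈ ℕ`,
so that `n = Σ_{i ≥ 1} n^(i) 2^(i-1)`. -/
def natDigit (n i : ℕ) : ℕ := (n / 2 ^ (i - 1)) % 2

/-- `dyadicDigit x i` is the `i`-th dyadic digit `x^(i) = ⌊2^i x⌋ − 2⌊2^(i−1) x⌋`
(for `i ≥ 1`) of `x ∈ [0,1)`. -/
noncomputable def dyadicDigit (x : ℝ) (i : ℕ) : ℤ :=
  ⌊(2 : ℝ) ^ i * x⌋ - 2 * ⌊(2 : ℝ) ^ (i - 1) * x⌋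

/-- The sequency-ordered Walsh function
`w_n(x) = (−1)^{Σ_{i≥1} (n^(i) + n^(i+1)) x^(i)}`; the sum is finite since
`n^(i) = 0` for `i > n`, so it may be truncated at `i = n + 1`. -/
noncomputable def walsh (n : ℕ) (x : ℝ) : ℝ :=
  (-1 : ℝ) ^ ∑ i ∈ Finset.Icc 1 (n + 1),
    (natDigit n i + natDigit n (i + 1)) * (dyadicDigit x i).toNat

/-- The dyadic XOR `x ⊕ y := Σ_{i≥1} |x^(i) − y^(i)| 2^{−i}` of `x, y ∈ [0,1)`. -/
noncomputable def dyadicXor (x y : ℝ) : ℝ :=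
  ∑' i : ℕ, |(dyadicDigit x (i + 1) : ℝ) - (dyadicDigit y (i + 1) : ℝ)| / 2 ^ (i + 1)

/-! Cut `[0, 1]` into the `2 ^ j` dyadic intervals `[l / 2 ^ j, (l + 1) / 2 ^ j)` and substitute
`x = (t + l) / 2 ^ j` on each. The first `j` dyadic digits of `(t + l) / 2 ^ j` are the binary
digits of `l` (in reverse order) and the later ones are the digits of `t`, so the Walsh function
factors as `w_n ((t + l) / 2 ^ j) = w_n (l / 2 ^ j) * w_{n / 2 ^ j} t`. The pieces with `l ≥ ν + m`
vanish by the support condition, and `ν + m ≤ 2 ^ j` guarantees that no needed piece is missing. -/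

theorem natDigit_eq_zero_of_lt {n i : ℕ} (h : n < 2 ^ (i - 1)) : natDigit n i = 0 := by
  rw [natDigit, Nat.div_eq_of_lt h, Nat.zero_mod]

theorem natDigit_div_two_pow (n j k : ℕ) : natDigit (n / 2 ^ j) (k + 1) = natDigit n (j + k + 1) := by
  simp only [natDigit, Nat.add_sub_cancel, Nat.div_div_eq_div_mul, ← pow_add]

theorem Int.floor_natCast_add_div_natCast (l N : ℕ) {t : ℝ} (ht0 : 0 ≤ t) (ht1 : t < 1) :
    ⌊((l : ℝ) + t) / N⌋ = ((l / N : ℕ) : ℤ) := by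
  rw [Int.floor_div_natCast, Int.floor_natCast_add, Int.floor_eq_zero_iff.2 ⟨ht0, ht1⟩, add_zero,
    Int.natCast_div]

theorem dyadicDigit_natCast_add_div_two_pow_of_lt (l : ℕ) {t : ℝ} (ht0 : 0 ≤ t) (ht1 : t < 1)
    {i j : ℕ} (hij : i < j) :
    dyadicDigit (((l : ℝ) + t) / 2 ^ j) (i + 1) = natDigit l (j - i) := by
  obtain ⟨k, rfl⟩ := Nat.exists_eq_add_of_lt hij
  have hfloor (a b : ℕ) :
      ⌊(2 : ℝ) ^ a * (((l : ℝ) + t) / 2 ^ (a + b))⌋ = ((l / 2 ^ b : ℕ) : ℤ) := by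
    rw [← Int.floor_natCast_add_div_natCast l _ ht0 ht1]
    push_cast
    congr 1
    field_simp
    ring
  rw [dyadicDigit, Nat.add_sub_cancel, show i + k + 1 = i + 1 + k by ring, hfloor,
    show i + 1 + k = i + (k + 1) by ring, hfloor, show i + (k + 1) - i = k + 1 by omega, natDigit,
    Nat.add_sub_cancel, pow_succ, ← Nat.div_div_eq_div_mul]
  omega

theorem dyadicDigit_natCast_add_div_two_pow (l : ℕ) (t : ℝ) (j k : ℕ) :
    dyadicDigit (((l : ℝ) + t) / 2 ^ j) (j + k + 1) = dyadicDigit t (k + 1) := by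
  have hscale (a : ℕ) : (2 : ℝ) ^ (j + a) * (((l : ℝ) + t) / 2 ^ j)
      = ((2 ^ a * l : ℕ) : ℝ) + 2 ^ a * t := by
    push_cast
    field_simp
    ring
  rw [dyadicDigit, dyadicDigit, Nat.add_sub_cancel, Nat.add_sub_cancel, add_assoc, hscale, hscale,
    Int.floor_natCast_add, Int.floor_natCast_add]
  push_cast
  ring

/-- The exponent of `-1` in `walsh`, cut off at `M` and indexed from `0`, so that it splits along
`Finset.sum_range_add`. -/
noncomputable def walshExponent (n M : ℕ) (x : ℝ) : ℕ :=
  ∑ i ∈ Finset.range M, (natDigit n (i + 1) + natDigit n (i + 2)) * (dyadicDigit x (i + 1)).toNat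

theorem walshExponent_add (n M M' : ℕ) (x : ℝ) :
    walshExponent n (M + M') x = walshExponent n M x + ∑ i ∈ Finset.range M',
      (natDigit n (M + i + 1) + natDigit n (M + i + 2)) * (dyadicDigit x (M + i + 1)).toNat :=
  Finset.sum_range_add _ M M'

theorem walsh_eq_neg_one_pow_walshExponent {n M : ℕ} (hM : n + 1 ≤ M) (x : ℝ) :
    walsh n x = (-1) ^ walshExponent n M x := by
  have hhigh {i : ℕ} (hi : n + 2 ≤ i) : natDigit n i = 0 := by
    apply natDigit_eq_zero_of_lt
    calc n < 2 ^ n := Nat.lt_two_pow_self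
      _ ≤ 2 ^ (i - 1) := Nat.pow_le_pow_right two_pos (by omega)
  obtain ⟨M', rfl⟩ := Nat.exists_eq_add_of_le hM
  rw [walshExponent_add, Finset.sum_eq_zero fun i _ => by
    rw [hhigh (by omega), hhigh (by omega), zero_add, zero_mul], add_zero,
    walsh, walshExponent, ← Finset.Ico_add_one_right_eq_Icc, Finset.sum_Ico_eq_sum_range]
  simp only [add_comm 1, add_assoc, one_add_one_eq_two]
  rfl

theorem walsh_natCast_add_div_two_pow (n j l : ℕ) {t : ℝ} (ht0 : 0 ≤ t) (ht1 : t < 1) :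
    walsh n (((l : ℝ) + t) / 2 ^ j) = walsh n ((l : ℝ) / 2 ^ j) * walsh (n / 2 ^ j) t := by
  have hlow : walshExponent n j (((l : ℝ) + t) / 2 ^ j) = walshExponent n j ((l : ℝ) / 2 ^ j) := by
    refine Finset.sum_congr rfl fun i hi => ?_
    have hij := Finset.mem_range.1 hi
    rw [dyadicDigit_natCast_add_div_two_pow_of_lt l ht0 ht1 hij,
      ← dyadicDigit_natCast_add_div_two_pow_of_lt l le_rfl zero_lt_one hij, add_zero]
  have hhigh : ∑ i ∈ Finset.range (n + 1), (natDigit n (j + i + 1) + natDigit n (j + i + 2)) *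
      (dyadicDigit (((l : ℝ) + t) / 2 ^ j) (j + i + 1)).toNat
      = walshExponent (n / 2 ^ j) (n + 1) t := by
    refine Finset.sum_congr rfl fun i _ => ?_
    rw [dyadicDigit_natCast_add_div_two_pow, natDigit_div_two_pow, natDigit_div_two_pow]
    rfl
  have hhigh0 : ∑ i ∈ Finset.range (n + 1), (natDigit n (j + i + 1) + natDigit n (j + i + 2)) *
      (dyadicDigit ((l : ℝ) / 2 ^ j) (j + i + 1)).toNat = 0 := by
    refine Finset.sum_eq_zero fun i _ => ?_
    rw [← add_zero (l : ℝ), dyadicDigit_natCast_add_div_two_pow]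
    simp [dyadicDigit]
  have hM : n / 2 ^ j + 1 ≤ n + 1 := Nat.succ_le_succ (Nat.div_le_self n _)
  rw [walsh_eq_neg_one_pow_walshExponent (M := j + (n + 1)) (by omega),
    walsh_eq_neg_one_pow_walshExponent (M := j + (n + 1)) (by omega),
    walsh_eq_neg_one_pow_walshExponent hM, walshExponent_add, walshExponent_add, hlow, hhigh,
    hhigh0, add_zero, pow_add]

theorem Finset.sum_Icc_intCast_sub_one {M : Type*} [AddCommMonoid M] (N : ℕ) (f : ℤ → M) :
    ∑ l ∈ Finset.Icc 0 ((N : ℤ) - 1), f l = ∑ l ∈ Finset.range N, f l := by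
  rw [Int.Icc_eq_finset_map, Finset.sum_map]
  simp

theorem measurable_walsh (n : ℕ) : Measurable (walsh n) := by
  unfold walsh dyadicDigit
  fun_prop

theorem norm_walsh (n : ℕ) (x : ℝ) : ‖walsh n x‖ = 1 := by
  rw [walsh, norm_pow, norm_neg, norm_one, one_pow]

theorem IntervalIntegrable.mul_walsh {f : ℝ → ℝ} {μ : Measure ℝ} {a b : ℝ}
    (hf : IntervalIntegrable f μ a b) (n : ℕ) :
    IntervalIntegrable (fun x => f x * walsh n x) μ a b :=
  have hbound : ∀ᵐ x ∂μ, ‖walsh n x‖ ≤ 1 := ae_of_all _ fun x => (norm_walsh n x).le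
  ⟨hf.1.mul_bdd (measurable_walsh n).aestronglyMeasurable (ae_restrict_of_ae hbound),
    hf.2.mul_bdd (measurable_walsh n).aestronglyMeasurable (ae_restrict_of_ae hbound)⟩

theorem intervalIntegral.integral_zero_one_eq_sum_comp_add_div {E : Type*} [NormedAddCommGroup E]
    [NormedSpace ℝ E] {f : ℝ → E} (hf : IntervalIntegrable f volume 0 1) {N : ℕ} (hN : N ≠ 0) :
    ∫ x in (0 : ℝ)..1, f x =
      ∑ l ∈ Finset.range N, (N : ℝ)⁻¹ • ∫ t in (0 : ℝ)..1, f ((t + l) / N) := by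
  have hN' : (N : ℝ) ≠ 0 := Nat.cast_ne_zero.2 hN
  have hmem {k : ℕ} (hk : k ≤ N) : (k : ℝ) / N ∈ Set.uIcc 0 1 := by
    rw [Set.uIcc_of_le zero_le_one]
    exact ⟨by positivity, div_le_one_of_le₀ (Nat.cast_le.2 hk) (Nat.cast_nonneg N)⟩
  have hpieces := intervalIntegral.sum_integral_adjacent_intervals (a := fun k : ℕ => (k : ℝ) / N)
    fun k hk => hf.mono_set (Set.uIcc_subset_uIcc (hmem hk.le) (hmem hk))
  simp only [Nat.cast_zero, zero_div, div_self hN', Nat.cast_succ] at hpieces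
  rw [← hpieces]
  refine Finset.sum_congr rfl fun l _ => ?_
  rw [intervalIntegral.integral_comp_add_right (fun x => f (x / N)), zero_add, add_comm 1,
    intervalIntegral.integral_comp_div _ hN', inv_smul_smul₀ hN']

theorem integral_mul_walsh_add_natCast_div_two_pow (g : ℝ → ℝ) (n j l : ℕ) :
    ∫ t in (0 : ℝ)..1, g t * walsh n ((t + l) / 2 ^ j)
      = walsh n ((l : ℝ) / 2 ^ j) * ∫ t in (0 : ℝ)..1, g t * walsh (n / 2 ^ j) t := by
  rw [← intervalIntegral.integral_const_mul]
  refine intervalIntegral.integral_congr_uIoo fun t ht => ?_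
  rw [Set.uIoo_of_le zero_le_one] at ht
  rw [add_comm, walsh_natCast_add_div_two_pow n j l ht.1.le ht.2]
  ring

theorem intervalIntegral.integral_comp_add_mul_eq_zero {φ : ℝ → ℝ} {a : ℝ}
    (hφ : ∀ᵐ x, a < x → φ x = 0) (g : ℝ → ℝ) {l : ℝ} (hl : a ≤ l) : ∫ t in (0 : ℝ)..1, φ (t + l) * g t = 0 := by
  have hshift : ∀ᵐ t, a < t + l → φ (t + l) = 0 :=
    (measurePreserving_add_right volume l).quasiMeasurePreserving.ae hφ
  rw [intervalIntegral.integral_congr_ae (g := fun _ => 0), intervalIntegral.integral_zero]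
  filter_upwards [hshift] with t ht htI
  rw [Set.uIoc_of_le zero_le_one] at htI
  rw [ht (by linarith [htI.1]), zero_mul]

theorem integral_dilation_mul_walsh_comp_add_div (φ : ℝ → ℝ) (n j l : ℕ) :
    ((2 ^ j : ℕ) : ℝ)⁻¹ • ∫ t in (0 : ℝ)..1,
      ((2 : ℝ) ^ ((j : ℝ) / 2) * φ (2 ^ j * ((t + l) / (2 ^ j : ℕ)))) *
        walsh n ((t + l) / (2 ^ j : ℕ)) =
      (2 : ℝ) ^ (-(j : ℝ) / 2) * walsh n ((l : ℝ) / 2 ^ j) *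
        ∫ x in (0 : ℝ)..1, φ (x + l) * walsh (n / 2 ^ j) x := by
  have hscale : ((2 : ℝ) ^ j)⁻¹ * (2 : ℝ) ^ ((j : ℝ) / 2) = (2 : ℝ) ^ (-(j : ℝ) / 2) := by
    rw [← Real.rpow_natCast, ← Real.rpow_neg zero_le_two, ← Real.rpow_add zero_lt_two]
    congr 1
    ring
  have h2j : (2 : ℝ) ^ j ≠ 0 := by positivity
  simp only [Nat.cast_pow, Nat.cast_ofNat, mul_div_cancel₀ _ h2j, mul_assoc,
    intervalIntegral.integral_const_mul, integral_mul_walsh_add_natCast_div_two_pow, smul_eq_mul]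
  rw [← hscale, mul_assoc]

theorem walsh_boundary_left_edge_general (ν : ℕ) (m : ℕ) (hm : m < ν)
    (φleft : ℝ → ℝ) (hL2 : MemLp φleft 2 volume)
    (hsupp : ∀ᵐ x : ℝ, x ∉ Set.Icc (0 : ℝ) ((ν : ℝ) + m) → φleft x = 0)
    (j : ℕ) (hj : 2 * ν ≤ 2 ^ j) (n : ℕ) :
    ∫ x in (0 : ℝ)..1, ((2 : ℝ) ^ ((j : ℝ) / 2) * φleft (2 ^ j * x)) * walsh n x =
      ∑ l ∈ Finset.Icc (0 : ℤ) ((ν : ℤ) - 1 + m),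
        (2 : ℝ) ^ (-(j : ℝ) / 2) * walsh n ((l : ℝ) / 2 ^ j) *
          ∫ x in (0 : ℝ)..1, φleft (x + l) * walsh (n / 2 ^ j) x := by
  have h2j : (2 : ℝ) ^ j ≠ 0 := by positivity
  have hφ : IntervalIntegrable φleft volume 0 (2 ^ j) :=
    ((hL2.locallyIntegrable one_le_two).integrableOn_isCompact isCompact_uIcc).intervalIntegrable
  have hint : IntervalIntegrable
      (fun x => ((2 : ℝ) ^ ((j : ℝ) / 2) * φleft (2 ^ j * x)) * walsh n x) volume 0 1 := by
    have := (hφ.comp_mul_left (c := 2 ^ j)).const_mul ((2 : ℝ) ^ ((j : ℝ) / 2))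
    rw [zero_div, div_self h2j] at this
    exact this.mul_walsh n
  have hvanish : ∀ᵐ x, (ν : ℝ) + m < x → φleft x = 0 :=
    hsupp.mono fun x hx hlt => hx fun hmem => hlt.not_ge hmem.2
  rw [intervalIntegral.integral_zero_one_eq_sum_comp_add_div hint (N := 2 ^ j) (by positivity),
    Finset.sum_congr rfl fun l _ => integral_dilation_mul_walsh_comp_add_div φleft n j l,
    show (ν : ℤ) - 1 + m = ((ν + m : ℕ) : ℤ) - 1 by push_cast; ring, Finset.sum_Icc_intCast_sub_one]
  push_cast
  refine (Finset.sum_subset (Finset.range_subset_range.2 (by omega)) fun l _ hl => ?_).symm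
  have hl' : (ν : ℝ) + m ≤ l := by exact_mod_cast not_lt.1 (Finset.mem_range.not.1 hl)
  rw [intervalIntegral.integral_comp_add_mul_eq_zero hvanish _ hl', mul_zero]

/-- Left boundary scaling functions: for `ν ≥ 2`, `0 ≤ m ≤ ν−1`,
`φ_m^left ∈ L²(ℝ)` supported in `[0, ν+m]` and `2^j ≥ 2ν`, the Walsh coefficients of
`φ^bd_{j,m}(x) = 2^{j/2} φ_m^left(2^j x)` on `[0,1]` satisfy, for every `n ∈ ℕ`:
`∫₀¹ φ^bd_{j,m}(x) w_n(x) dx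
  = Σ_{l=0}^{ν−1+m} 2^{−j/2} w_n(l/2^j) ∫₀¹ φ_m^left(x+l) w_{⌊n/2^j⌋}(x) dx`. -/
theorem walsh_boundary_left_edge (ν : ℕ) (hν : 2 ≤ ν) (m : ℕ) (hm : m < ν)
    (φleft : ℝ → ℝ) (hL2 : MemLp φleft 2 volume)
    (hsupp : ∀ᵐ x : ℝ, x ∉ Set.Icc (0 : ℝ) ((ν : ℝ) + m) → φleft x = 0)
    (j : ℕ) (hj : 2 * ν ≤ 2 ^ j) (n : ℕ) :
    ∫ x in (0 : ℝ)..1, ((2 : ℝ) ^ ((j : ℝ) / 2) * φleft (2 ^ j * x)) * walsh n x =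
      ∑ l ∈ Finset.Icc (0 : ℤ) ((ν : ℤ) - 1 + m),
        (2 : ℝ) ^ (-(j : ℝ) / 2) * walsh n ((l : ℝ) / 2 ^ j) *
          ∫ x in (0 : ℝ)..1, φleft (x + l) * walsh (n / 2 ^ j) x :=
  walsh_boundary_left_edge_general ν m hm φleft hL2 hsupp j hj n
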